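/- arXiv:2509.04885 — 4 statements merged into one kernel-verified Lean document; each statement's English description precedes it below -/
import Mathlib

section
/- Let (X,Y) be uniformly distributed on the disk of radius r > 0, and let A be a real constant. If A ≥ r² then P(Y² ≥ A) = 0; if A ≤ 0 then P(Y² ≥ A) = 1; and if 0 ≤ A ≤ r² then P(Y² ≥ A) = 1 − (2/(π r²))·(√A·√(r² − A) + r²·arcsin(√A / r)). -/
open Real MeasureTheory intervalIntegral

lemma myderiv (r : ℝ) (hr : 0 < r) {x : ℝ} (hx : x ∈ Set.Ioo (-r) r) :
    HasDerivAt (fun x : ℝ => x * Real.sqrt (r^2 - x^2) + r^2 * Real.arcsin (x/r))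
      (2 * Real.sqrt (r^2 - x^2)) x := by
  obtain ⟨hx1, hx2⟩ := hx
  have hu : (0:ℝ) < r^2 - x^2 := by nlinarith
  have hsq : Real.sqrt (r^2 - x^2) ≠ 0 := by positivity
  have hsqpos : 0 < Real.sqrt (r^2 - x^2) := by positivity
  have h1 : HasDerivAt (fun x : ℝ => r^2 - x^2) (-(2*x)) x := by
    simpa using ((hasDerivAt_pow 2 x).const_sub (r^2))
  have h2 : HasDerivAt (fun x : ℝ => Real.sqrt (r^2 - x^2))
      (1/(2*Real.sqrt (r^2 - x^2)) * (-(2*x))) x :=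
    (Real.hasDerivAt_sqrt (ne_of_gt hu)).comp x h1
  have h3 : HasDerivAt (fun x : ℝ => x * Real.sqrt (r^2 - x^2))
      (1 * Real.sqrt (r^2-x^2) + x * (1/(2*Real.sqrt (r^2 - x^2)) * (-(2*x)))) x :=
    (hasDerivAt_id x).mul h2
  have hxr1 : x / r ≠ -1 := by
    intro h; have : x = -r := by field_simp at h; linarith
    linarith
  have hxr2 : x / r ≠ 1 := by
    intro h; field_simp at h; linarith
  have h4 : HasDerivAt (fun x : ℝ => Real.arcsin (x/r))
      (1 / Real.sqrt (1 - (x/r)^2) * (1/r)) x := by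
    have hd : HasDerivAt (fun x : ℝ => x / r) (1/r) x := (hasDerivAt_id x).div_const r
    exact (Real.hasDerivAt_arcsin hxr1 hxr2).comp x hd
  have h5 := h3.add (h4.const_mul (r^2))
  convert h5 using 1
  case e'_4 => rfl
  case e'_5 => rfl
  case e'_8 => rfl
  have hs : Real.sqrt (1 - (x/r)^2) = Real.sqrt (r^2 - x^2) / r := by
    have e : 1 - (x/r)^2 = (r^2-x^2)/r^2 := by field_simp
    rw [e, Real.sqrt_div hu.le, Real.sqrt_sq hr.le]
  rw [hs]
  have hss : Real.sqrt (r^2 - x^2) * Real.sqrt (r^2 - x^2) = r^2 - x^2 :=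
    Real.mul_self_sqrt hu.le
  field_simp
  linear_combination hss

lemma myftc (r a : ℝ) (hr : 0 < r) (ha : 0 ≤ a) (har : a ≤ r) :
    ∫ x in (-a)..a, 2 * Real.sqrt (r^2 - x^2)
      = 2*(a*Real.sqrt (r^2-a^2) + r^2 * Real.arcsin (a/r)) := by
  have hcont : Continuous (fun x : ℝ => 2 * Real.sqrt (r^2 - x^2)) := by
    continuity
  have hF : Continuous (fun x : ℝ => x * Real.sqrt (r^2 - x^2) + r^2 * Real.arcsin (x/r)) := by
    continuity
  rw [integral_eq_sub_of_hasDeriv_right_of_le (by linarith)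
      (hF.continuousOn)
      (fun x hx => (myderiv r hr ⟨by linarith [hx.1], by linarith [hx.2]⟩).hasDerivWithinAt)
      (hcont.intervalIntegrable _ _)]
  have e1 : r^2 - (-a)^2 = r^2 - a^2 := by ring
  rw [e1, show (-a:ℝ)/r = -(a/r) by ring, Real.arcsin_neg]
  ring

lemma myslice (r a : ℝ) (hr : 0 < r) (ha : 0 ≤ a) (har : a ≤ r)
    (hftc : ∫ x in (-a)..a, 2 * Real.sqrt (r^2 - x^2)
      = 2*(a*Real.sqrt (r^2-a^2) + r^2 * Real.arcsin (a/r))) :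
    volume {p : ℝ × ℝ | p.1^2 + p.2^2 ≤ r^2 ∧ p.2 ∈ Set.Ioo (-a) a}
      = ENNReal.ofReal (2*(a*Real.sqrt (r^2-a^2) + r^2 * Real.arcsin (a/r))) := by
  set s : Set (ℝ × ℝ) := {p : ℝ × ℝ | p.1^2 + p.2^2 ≤ r^2 ∧ p.2 ∈ Set.Ioo (-a) a} with hs_def
  have hmeas : MeasurableSet s := by
    apply MeasurableSet.inter
    · exact measurableSet_le (((measurable_fst.pow_const 2).add (measurable_snd.pow_const 2))) measurable_const
    · exact measurable_snd measurableSet_Ioo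
  have hslice : ∀ y : ℝ, volume ((fun x => (x, y)) ⁻¹' s)
      = Set.indicator (Set.Ioo (-a) a)
        (fun y => ENNReal.ofReal (2 * Real.sqrt (r^2 - y^2))) y := by
    intro y
    by_cases hy : y ∈ Set.Ioo (-a) a
    · rw [Set.indicator_of_mem hy]
      have hu : (0:ℝ) ≤ r^2 - y^2 := by
        obtain ⟨h1, h2⟩ := hy; nlinarith
      have hpre : (fun x => (x, y)) ⁻¹' s
          = Set.Icc (-(Real.sqrt (r^2 - y^2))) (Real.sqrt (r^2 - y^2)) := by
        ext x
        simp only [hs_def, Set.mem_preimage, Set.mem_setOf_eq, Set.mem_Icc, hy, and_true]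
        constructor
        · intro h
          have : |x| ≤ Real.sqrt (r^2 - y^2) := Real.abs_le_sqrt (by linarith)
          exact abs_le.1 this
        · intro ⟨h1, h2⟩
          nlinarith [Real.sq_sqrt hu, Real.sqrt_nonneg (r^2 - y^2)]
      rw [hpre, Real.volume_Icc]
      congr 1; ring
    · rw [Set.indicator_of_notMem hy]
      have : (fun x => (x, y)) ⁻¹' s = ∅ := by
        ext x
        simp only [hs_def, Set.mem_preimage, Set.mem_setOf_eq, Set.mem_empty_iff_false,
          iff_false]
        tauto
      rw [this]; simp
  have hcont : Continuous (fun y : ℝ => 2 * Real.sqrt (r^2 - y^2)) := by continuity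
  have hint : IntegrableOn (fun y : ℝ => 2 * Real.sqrt (r^2 - y^2)) (Set.Ioo (-a) a) :=
    (hcont.integrableOn_Icc).mono_set Set.Ioo_subset_Icc_self
  calc volume s = ∫⁻ y, volume ((fun x => (x, y)) ⁻¹' s) := by
        rw [Measure.volume_eq_prod, Measure.prod_apply_symm hmeas]
    _ = ∫⁻ y, Set.indicator (Set.Ioo (-a) a)
          (fun y => ENNReal.ofReal (2 * Real.sqrt (r^2 - y^2))) y :=
        lintegral_congr hslice
    _ = ∫⁻ y in Set.Ioo (-a) a, ENNReal.ofReal (2 * Real.sqrt (r^2 - y^2)) :=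
        lintegral_indicator measurableSet_Ioo _
    _ = ENNReal.ofReal (∫ y in Set.Ioo (-a) a, 2 * Real.sqrt (r^2 - y^2)) :=
        (ofReal_integral_eq_lintegral_ofReal hint
          (Filter.Eventually.of_forall fun y => by positivity)).symm
    _ = ENNReal.ofReal (2*(a*Real.sqrt (r^2-a^2) + r^2 * Real.arcsin (a/r))) := by
        rw [← MeasureTheory.integral_Ioc_eq_integral_Ioo,
          ← intervalIntegral.integral_of_le (by linarith : -a ≤ a), hftc]

lemma myslice' (r a : ℝ) (hr : 0 < r) (ha : 0 ≤ a) (har : a ≤ r) :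
    volume {p : ℝ × ℝ | p.1^2 + p.2^2 ≤ r^2 ∧ p.2 ∈ Set.Ioo (-a) a}
      = ENNReal.ofReal (2*(a*Real.sqrt (r^2-a^2) + r^2 * Real.arcsin (a/r))) :=
  myslice r a hr ha har (myftc r a hr ha har)

lemma twopts (r : ℝ) : volume (({0} ×ˢ {r, -r} : Set (ℝ × ℝ))) = 0 := by
  rw [Measure.volume_eq_prod, Measure.prod_prod]
  simp

lemma sub2 (r A : ℝ) (hr : 0 < r) (hA : r^2 ≤ A) :
    {p : ℝ × ℝ | p.1 ^ 2 + p.2 ^ 2 ≤ r ^ 2 ∧ A ≤ p.2 ^ 2} ⊆ ({0} ×ˢ {r, -r}) := by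
  rintro ⟨x, y⟩ ⟨h1, h2⟩
  simp only [Set.mem_prod, Set.mem_singleton_iff, Set.mem_insert_iff]
  have hx : x = 0 := by nlinarith [sq_nonneg x]
  have hy : (y - r) * (y + r) = 0 := by nlinarith
  rcases mul_eq_zero.1 hy with h | h
  · exact ⟨hx, Or.inl (by linarith)⟩
  · exact ⟨hx, Or.inr (by linarith)⟩

lemma volD (r : ℝ) (hr : 0 < r) :
    volume {p : ℝ × ℝ | p.1^2 + p.2^2 ≤ r^2} = ENNReal.ofReal (π * r^2) := by
  have hs := myslice' r r hr hr.le le_rfl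
  have hval : 2*(r*Real.sqrt (r^2-r^2) + r^2 * Real.arcsin (r/r)) = π * r^2 := by
    rw [sub_self, Real.sqrt_zero, div_self (ne_of_gt hr), Real.arcsin_one]; ring
  rw [hval] at hs
  refine le_antisymm ?_ ?_
  · have hsub : {p : ℝ × ℝ | p.1^2 + p.2^2 ≤ r^2}
        ⊆ {p : ℝ × ℝ | p.1^2 + p.2^2 ≤ r^2 ∧ p.2 ∈ Set.Ioo (-r) r} ∪ ({0} ×ˢ {r, -r}) := by
      rintro ⟨x, y⟩ h
      by_cases hy : y ∈ Set.Ioo (-r) r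
      · exact Or.inl ⟨h, hy⟩
      · refine Or.inr (sub2 r (r^2) hr le_rfl ⟨h, ?_⟩)
        simp only [Set.mem_Ioo, not_and_or, not_lt] at hy
        rcases hy with h' | h' <;> nlinarith
    calc volume {p : ℝ × ℝ | p.1^2 + p.2^2 ≤ r^2}
        ≤ volume ({p : ℝ × ℝ | p.1^2 + p.2^2 ≤ r^2 ∧ p.2 ∈ Set.Ioo (-r) r}
            ∪ ({0} ×ˢ {r, -r})) := measure_mono hsub
      _ ≤ volume {p : ℝ × ℝ | p.1^2 + p.2^2 ≤ r^2 ∧ p.2 ∈ Set.Ioo (-r) r}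
            + volume (({0} ×ˢ {r, -r} : Set (ℝ × ℝ))) := measure_union_le _ _
      _ = ENNReal.ofReal (π * r^2) := by rw [hs, twopts, add_zero]
  · rw [← hs]
    exact measure_mono fun p hp => hp.1

/-- Outage probability for a full-coverage lossless waveguide: with (X,Y) uniform on the
disk of radius r, P(Y² ≥ A) is 0 if A ≥ r², 1 if A ≤ 0, and
1 − (2/(π r²))(√A √(r²−A) + r² arcsin(√A/r)) if 0 ≤ A ≤ r². -/
theorem stmt1 (r A : ℝ) (hr : 0 < r) :
    (A ≥ r ^ 2 →
      (volume {p : ℝ × ℝ | p.1 ^ 2 + p.2 ^ 2 ≤ r ^ 2 ∧ A ≤ p.2 ^ 2}).toReal / (π * r ^ 2) = 0) ∧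
    (A ≤ 0 →
      (volume {p : ℝ × ℝ | p.1 ^ 2 + p.2 ^ 2 ≤ r ^ 2 ∧ A ≤ p.2 ^ 2}).toReal / (π * r ^ 2) = 1) ∧
    (0 ≤ A → A ≤ r ^ 2 →
      (volume {p : ℝ × ℝ | p.1 ^ 2 + p.2 ^ 2 ≤ r ^ 2 ∧ A ≤ p.2 ^ 2}).toReal / (π * r ^ 2)
        = 1 - 2 / (π * r ^ 2) *
            (Real.sqrt A * Real.sqrt (r ^ 2 - A) + r ^ 2 * Real.arcsin (Real.sqrt A / r))) := by
  have hpir : π * r ^ 2 ≠ 0 := by positivity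
  refine ⟨fun hA => ?_, fun hA => ?_, fun hA0 hA => ?_⟩
  · have h0 : volume {p : ℝ × ℝ | p.1 ^ 2 + p.2 ^ 2 ≤ r ^ 2 ∧ A ≤ p.2 ^ 2} = 0 :=
      measure_mono_null (sub2 r A hr hA) (twopts r)
    rw [h0]; simp
  · have hS : {p : ℝ × ℝ | p.1 ^ 2 + p.2 ^ 2 ≤ r ^ 2 ∧ A ≤ p.2 ^ 2}
        = {p : ℝ × ℝ | p.1^2 + p.2^2 ≤ r^2} := by
      ext p
      simp only [Set.mem_setOf_eq, and_iff_left_iff_imp]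
      exact fun _ => le_trans hA (sq_nonneg _)
    rw [hS, volD r hr, ENNReal.toReal_ofReal (by positivity), div_self hpir]
  · set a := Real.sqrt A with ha_def
    have ha : 0 ≤ a := Real.sqrt_nonneg A
    have ha2 : a^2 = A := Real.sq_sqrt hA0
    have har : a ≤ r := by
      rw [ha_def, show r = Real.sqrt (r^2) from (Real.sqrt_sq hr.le).symm]
      exact Real.sqrt_le_sqrt hA
    have key : ∀ y : ℝ, (A ≤ y^2 ↔ ¬(-a < y ∧ y < a)) := by
      intro y
      constructor
      · rintro h ⟨h1, h2⟩; nlinarith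
      · intro h
        rw [not_and_or, not_lt, not_lt] at h
        rcases h with h | h <;> nlinarith
    have hSDC : {p : ℝ × ℝ | p.1 ^ 2 + p.2 ^ 2 ≤ r ^ 2 ∧ A ≤ p.2 ^ 2}
        = {p : ℝ × ℝ | p.1^2 + p.2^2 ≤ r^2}
          \ {p : ℝ × ℝ | p.1^2 + p.2^2 ≤ r^2 ∧ p.2 ∈ Set.Ioo (-a) a} := by
      ext ⟨x, y⟩
      simp only [Set.mem_setOf_eq, Set.mem_diff, Set.mem_Ioo]
      constructor
      · rintro ⟨h1, h2⟩
        exact ⟨h1, fun hc => (key y).1 h2 hc.2⟩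
      · rintro ⟨h1, h2⟩
        exact ⟨h1, (key y).2 fun hy => h2 ⟨h1, hy⟩⟩
    have hCmeas : MeasurableSet {p : ℝ × ℝ | p.1^2 + p.2^2 ≤ r^2 ∧ p.2 ∈ Set.Ioo (-a) a} :=
      (measurableSet_le ((measurable_fst.pow_const 2).add (measurable_snd.pow_const 2))
        measurable_const).inter (measurable_snd measurableSet_Ioo)
    have hC := myslice' r a hr ha har
    have hD := volD r hr
    set X := 2*(a*Real.sqrt (r^2-a^2) + r^2 * Real.arcsin (a/r)) with hX_def
    have hX0 : 0 ≤ X := by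
      have h1 := Real.arcsin_nonneg.2 (by positivity : (0:ℝ) ≤ a/r)
      have h2 := Real.sqrt_nonneg (r^2 - a^2)
      positivity
    have hXle : X ≤ π * r^2 := by
      have hsub0 : {p : ℝ × ℝ | p.1^2 + p.2^2 ≤ r^2 ∧ p.2 ∈ Set.Ioo (-a) a}
          ⊆ {p : ℝ × ℝ | p.1^2 + p.2^2 ≤ r^2} := fun p hp => hp.1
      have hmono := measure_mono (μ := volume) hsub0
      rw [hC, hD] at hmono
      exact (ENNReal.ofReal_le_ofReal_iff (by positivity)).1 hmono
    have hvolS : volume {p : ℝ × ℝ | p.1 ^ 2 + p.2 ^ 2 ≤ r ^ 2 ∧ A ≤ p.2 ^ 2}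
        = ENNReal.ofReal (π * r^2 - X) := by
      have hsub : {p : ℝ × ℝ | p.1^2 + p.2^2 ≤ r^2 ∧ p.2 ∈ Set.Ioo (-a) a}
          ⊆ {p : ℝ × ℝ | p.1^2 + p.2^2 ≤ r^2} := fun p hp => hp.1
      have hdiff := measure_diff (μ := volume) hsub hCmeas.nullMeasurableSet
        (by rw [hC]; exact ENNReal.ofReal_ne_top)
      rw [hSDC, hdiff, hC, hD, ← ENNReal.ofReal_sub _ hX0]
    rw [hvolS, ENNReal.toReal_ofReal (by linarith)]
    have hr2 : r^2 - a^2 = r^2 - A := by rw [ha2]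
    rw [hX_def, hr2]
    field_simp
end

section
/- For constants r, h, η, P_t, σ > 0, the double integral (1/(π r²)) ∫∫_{x²+y² ≤ r²} log₂(1 + ηP_t/(σ²(y² + h²))) dx dy equals (1/ln 2)·ln(1 + ηP_t/(σ²h²)) + (2/ln 2)·[ln((1+Γ)/(1+Λ)) + (1/2)·(1−Γ)/(1+Γ) − (1/2)·(1−Λ)/(1+Λ)], where B = ηP_t + σ²h², Γ = √(1 + σ²r²/B), and Λ = √(1 + r²/h²). -/
open Real MeasureTheory Set

lemma aux_inner (r t : ℝ) (hr : 0 < r) (ht : 0 < t) :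
    ∫ y in (-r)..r, Real.sqrt (r^2 - y^2) / (y^2 + t)
      = π * (Real.sqrt (t + r^2) / Real.sqrt t - 1) := by
  set A : ℝ := Real.sqrt (t + r^2) / Real.sqrt t with hA
  set w : ℝ → ℝ := fun y => y * Real.sqrt (t + r^2) / (r * Real.sqrt (t + y^2)) with hw
  set H : ℝ → ℝ := fun y => A * Real.arcsin (w y) - Real.arcsin (y / r) with hH
  have htr : (0:ℝ) < t + r^2 := by positivity
  have hst : (0:ℝ) < Real.sqrt t := Real.sqrt_pos.2 ht
  have hstr : (0:ℝ) < Real.sqrt (t + r^2) := Real.sqrt_pos.2 htr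
  have hty : ∀ y : ℝ, (0:ℝ) < t + y^2 := fun y => by positivity
  have hsty : ∀ y : ℝ, (0:ℝ) < Real.sqrt (t + y^2) := fun y => Real.sqrt_pos.2 (hty y)
  -- continuity of H
  have hcont : ContinuousOn H (Icc (-r) r) := by
    apply ContinuousOn.sub
    · apply ContinuousOn.mul continuousOn_const
      apply Real.continuous_arcsin.comp_continuousOn
      apply ContinuousOn.div
      · fun_prop
      · apply ContinuousOn.mul continuousOn_const
        exact (Real.continuous_sqrt.comp (by fun_prop)).continuousOn
      · intro y _; exact (mul_pos hr (hsty y)).ne'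
    · exact (Real.continuous_arcsin.comp (by fun_prop)).continuousOn
  -- derivative
  have hderiv : ∀ y ∈ Ioo (-r) r, HasDerivAt H (Real.sqrt (r^2 - y^2) / (y^2 + t)) y := by
    intro y hy
    have hy2 : y^2 < r^2 := by
      exact sq_lt_sq' hy.1 hy.2
    have hry : (0:ℝ) < r^2 - y^2 := by linarith
    have hsry : (0:ℝ) < Real.sqrt (r^2 - y^2) := Real.sqrt_pos.2 hry
    -- derivative of inner w
    have hdw : HasDerivAt w (Real.sqrt (t + r^2) * t / (r * ((t + y^2) * Real.sqrt (t + y^2)))) y := by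
      have h1 : HasDerivAt (fun y : ℝ => t + y^2) (2*y) y := by
        simpa using ((hasDerivAt_pow 2 y).const_add t)
      have h2 : HasDerivAt (fun y : ℝ => Real.sqrt (t + y^2)) (2*y / (2 * Real.sqrt (t + y^2))) y :=
        (Real.hasDerivAt_sqrt (hty y).ne').comp y h1 |>.congr_deriv (by ring)
      have h3 : HasDerivAt (fun y : ℝ => y / Real.sqrt (t + y^2))
          ((1 * Real.sqrt (t+y^2) - y * (2*y/(2*Real.sqrt (t+y^2)))) / (Real.sqrt (t+y^2))^2) y :=
        (hasDerivAt_id y).div h2 (hsty y).ne'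
      have h4 : HasDerivAt w ((Real.sqrt (t + r^2) / r) *
          ((1 * Real.sqrt (t+y^2) - y * (2*y/(2*Real.sqrt (t+y^2)))) / (Real.sqrt (t+y^2))^2)) y := by
        have : w = fun y => (Real.sqrt (t + r^2) / r) * (y / Real.sqrt (t + y^2)) := by
          funext z; rw [hw]; ring
        rw [this]
        exact h3.const_mul _
      convert h4 using 1
      have e1 : (Real.sqrt (t+y^2))^2 = t + y^2 := Real.sq_sqrt (hty y).le
      field_simp
      linear_combination (-y^2) * e1
    -- |w y| < 1
    have hwsq : (w y)^2 < 1 := by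
      have : (w y)^2 = y^2 * (t + r^2) / (r^2 * (t + y^2)) := by
        rw [hw]; rw [div_pow, mul_pow, mul_pow, Real.sq_sqrt htr.le, Real.sq_sqrt (hty y).le]
      rw [this, div_lt_one (by positivity)]
      nlinarith [ht, hy2]
    have hne1 : w y ≠ 1 := by intro hcon; rw [hcon] at hwsq; norm_num at hwsq
    have hne2 : w y ≠ -1 := by intro hcon; rw [hcon] at hwsq; norm_num at hwsq
    have harc : HasDerivAt (fun z => Real.arcsin (w z))
        (1 / Real.sqrt (1 - (w y)^2) * (Real.sqrt (t + r^2) * t / (r * ((t + y^2) * Real.sqrt (t + y^2))))) y :=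
      (Real.hasDerivAt_arcsin hne2 hne1).comp y hdw
    have harc2 : HasDerivAt (fun z : ℝ => Real.arcsin (z / r))
        (1 / Real.sqrt (1 - (y/r)^2) * (1/r)) y := by
      have : HasDerivAt (fun z : ℝ => z / r) (1/r) y := by
        simpa using (hasDerivAt_id y).div_const r
      have hr1 : y / r ≠ 1 := by
        intro hcon
        have : y = r := by field_simp at hcon; linarith
        nlinarith
      have hr2 : y / r ≠ -1 := by
        intro hcon
        have : y = -r := by field_simp at hcon; linarith
        nlinarith
      exact (Real.hasDerivAt_arcsin hr2 hr1).comp y this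
    have hHd : HasDerivAt H
        (A * (1 / Real.sqrt (1 - (w y)^2) * (Real.sqrt (t + r^2) * t / (r * ((t + y^2) * Real.sqrt (t + y^2)))))
          - 1 / Real.sqrt (1 - (y/r)^2) * (1/r)) y :=
      (harc.const_mul A).sub harc2
    convert hHd using 1
    -- compute the sqrt expressions
    have e2 : 1 - (w y)^2 = t * (r^2 - y^2) / (r^2 * (t + y^2)) := by
      have : (w y)^2 = y^2 * (t + r^2) / (r^2 * (t + y^2)) := by
        rw [hw]; rw [div_pow, mul_pow, mul_pow, Real.sq_sqrt htr.le, Real.sq_sqrt (hty y).le]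
      rw [this]; field_simp; ring
    have e3 : Real.sqrt (1 - (w y)^2) = Real.sqrt t * Real.sqrt (r^2 - y^2) / (r * Real.sqrt (t + y^2)) := by
      rw [e2]
      have : t * (r^2 - y^2) / (r^2 * (t + y^2))
          = (Real.sqrt t * Real.sqrt (r^2 - y^2) / (r * Real.sqrt (t + y^2)))^2 := by
        rw [div_pow, mul_pow, mul_pow, Real.sq_sqrt ht.le, Real.sq_sqrt hry.le,
          Real.sq_sqrt (hty y).le]
      rw [this, Real.sqrt_sq (by positivity)]
    have e4 : Real.sqrt (1 - (y/r)^2) = Real.sqrt (r^2 - y^2) / r := by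
      have : 1 - (y/r)^2 = (Real.sqrt (r^2 - y^2) / r)^2 := by
        rw [div_pow, div_pow, Real.sq_sqrt hry.le]
        field_simp
      rw [this, Real.sqrt_sq (by positivity)]
    rw [e3, e4, hA]
    have s1 := Real.sq_sqrt ht.le
    have s2 := Real.sq_sqrt htr.le
    have s3 := Real.sq_sqrt (hty y).le
    have s4 := Real.sq_sqrt hry.le
    field_simp
    linear_combination (Real.sqrt t^2*(t+y^2)) * s4
      + ((t+y^2)*(t+r^2)) * s1
      + (-((t+y^2)*t)) * s2
  -- FTC
  have hint : IntervalIntegrable (fun y => Real.sqrt (r^2 - y^2) / (y^2 + t)) volume (-r) r := by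
    apply Continuous.intervalIntegrable
    exact (Real.continuous_sqrt.comp (by fun_prop)).div (by fun_prop) (fun y => (by positivity))
  have key := intervalIntegral.integral_eq_sub_of_hasDeriv_right_of_le (by linarith : -r ≤ r)
    hcont (fun y hy => (hderiv y hy).hasDerivWithinAt) hint
  rw [key, hH]
  beta_reduce
  have hwr : w r = 1 := by
    rw [hw]; simp only []
    rw [mul_comm r]; rw [mul_div_mul_comm]
    rw [div_self (Real.sqrt_pos.2 htr).ne', div_self hr.ne', mul_one]
  have hwmr : w (-r) = -1 := by
    rw [hw]; simp only []
    have : t + (-r)^2 = t + r^2 := by ring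
    rw [this, neg_mul, neg_div, mul_comm r, mul_div_mul_comm,
      div_self (Real.sqrt_pos.2 htr).ne', div_self hr.ne', mul_one]
  rw [hwr, hwmr, Real.arcsin_one, Real.arcsin_neg, div_self hr.ne',
    neg_div, Real.arcsin_one, Real.arcsin_neg, div_self hr.ne', Real.arcsin_one]
  rw [hA]; ring

noncomputable def Mfun (r b : ℝ) : ℝ :=
  Real.sqrt b * Real.sqrt (b + r^2) + r^2 * Real.log (Real.sqrt b + Real.sqrt (b + r^2)) - b

lemma aux_outer (r a b : ℝ) (hr : 0 < r) (ha : 0 < a) (hab : a ≤ b) :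
    ∫ t in a..b, (Real.sqrt (t + r^2) / Real.sqrt t - 1) = Mfun r b - Mfun r a := by
  have huIcc : Set.uIcc a b = Set.Icc a b := Set.uIcc_of_le hab
  have hderiv : ∀ u ∈ Set.uIcc a b,
      HasDerivAt (fun t => Mfun r t) (Real.sqrt (u + r^2) / Real.sqrt u - 1) u := by
    intro u hu
    rw [huIcc] at hu
    have hu0 : 0 < u := lt_of_lt_of_le ha hu.1
    have hur : 0 < u + r^2 := by positivity
    have hsu : 0 < Real.sqrt u := Real.sqrt_pos.2 hu0
    have hsur : 0 < Real.sqrt (u + r^2) := Real.sqrt_pos.2 hur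
    have h1 : HasDerivAt (fun t : ℝ => Real.sqrt t) (1 / (2 * Real.sqrt u)) u :=
      Real.hasDerivAt_sqrt hu0.ne'
    have h2 : HasDerivAt (fun t : ℝ => Real.sqrt (t + r^2)) (1 / (2 * Real.sqrt (u + r^2))) u := by
      have := (Real.hasDerivAt_sqrt hur.ne').comp u ((hasDerivAt_id u).add_const (r^2))
      simpa [Function.comp_def] using this
    have h3 : HasDerivAt (fun t : ℝ => Real.sqrt t * Real.sqrt (t + r^2))
        (1 / (2 * Real.sqrt u) * Real.sqrt (u + r^2) + Real.sqrt u * (1 / (2 * Real.sqrt (u + r^2)))) u :=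
      h1.mul h2
    have h4 : HasDerivAt (fun t : ℝ => Real.log (Real.sqrt t + Real.sqrt (t + r^2)))
        ((Real.sqrt u + Real.sqrt (u + r^2))⁻¹ * (1 / (2 * Real.sqrt u) + 1 / (2 * Real.sqrt (u + r^2)))) u :=
      (Real.hasDerivAt_log (by positivity)).comp u (h1.add h2)
    have h5 : HasDerivAt (fun t => Mfun r t)
        (1 / (2 * Real.sqrt u) * Real.sqrt (u + r^2) + Real.sqrt u * (1 / (2 * Real.sqrt (u + r^2)))
          + r^2 * ((Real.sqrt u + Real.sqrt (u + r^2))⁻¹ * (1 / (2 * Real.sqrt u) + 1 / (2 * Real.sqrt (u + r^2))))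
          - 1) u := by
      unfold Mfun
      exact (h3.add (h4.const_mul (r^2))).sub (hasDerivAt_id u)
    convert h5 using 1
    have s1 : Real.sqrt u ^ 2 = u := Real.sq_sqrt hu0.le
    have s2 : Real.sqrt (u + r^2) ^ 2 = u + r^2 := Real.sq_sqrt hur.le
    field_simp
    ring_nf
    linear_combination
      (-(Real.sqrt u) - Real.sqrt (u+r^2)) * s1
      + (Real.sqrt u + Real.sqrt (u+r^2)) * s2
  have hint : IntervalIntegrable (fun t => Real.sqrt (t + r^2) / Real.sqrt t - 1) volume a b := by
    apply ContinuousOn.intervalIntegrable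
    apply ContinuousOn.sub _ continuousOn_const
    apply ContinuousOn.div
    · exact (Real.continuous_sqrt.comp (by fun_prop)).continuousOn
    · exact Real.continuous_sqrt.continuousOn
    · intro t ht
      rw [huIcc] at ht
      exact (Real.sqrt_pos.2 (lt_of_lt_of_le ha ht.1)).ne'
  exact intervalIntegral.integral_eq_sub_of_hasDerivAt hderiv hint

lemma aux_log (y a b : ℝ) (ha : 0 < a) (hab : a ≤ b) :
    ∫ t in a..b, (y^2 + t)⁻¹ = Real.log (y^2 + b) - Real.log (y^2 + a) := by
  have hderiv : ∀ u ∈ Set.uIcc a b, HasDerivAt (fun t => Real.log (y^2 + t)) ((y^2 + u)⁻¹) u := by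
    intro u hu
    rw [Set.uIcc_of_le hab] at hu
    have hu0 : 0 < y^2 + u := by nlinarith [sq_nonneg y, hu.1, ha]
    have := (Real.hasDerivAt_log hu0.ne').comp u ((hasDerivAt_id u).const_add (y^2))
    simpa [Function.comp_def] using this
  have hint : IntervalIntegrable (fun t => (y^2 + t)⁻¹) volume a b := by
    apply ContinuousOn.intervalIntegrable
    apply ContinuousOn.inv₀ (by fun_prop)
    intro t ht
    rw [Set.uIcc_of_le hab] at ht
    nlinarith [sq_nonneg y, ht.1, ha]
  exact intervalIntegral.integral_eq_sub_of_hasDerivAt hderiv hint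

lemma aux_disk (r : ℝ) (hr : 0 < r) (g : ℝ → ℝ) (hg : Continuous g) :
    ∫ p in {p : ℝ × ℝ | p.1^2 + p.2^2 ≤ r^2}, g p.2
      = ∫ y in (-r)..r, 2 * Real.sqrt (r^2 - y^2) * g y := by
  set S : Set (ℝ × ℝ) := {p : ℝ × ℝ | p.1^2 + p.2^2 ≤ r^2} with hS
  have hSclosed : IsClosed S := by
    have : S = (fun p : ℝ × ℝ => p.1^2 + p.2^2) ⁻¹' (Iic (r^2)) := rfl
    rw [this]
    exact IsClosed.preimage (by fun_prop) isClosed_Iic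
  have hSmeas : MeasurableSet S := hSclosed.measurableSet
  have hScompact : IsCompact S := by
    apply Metric.isCompact_of_isClosed_isBounded hSclosed
    apply Bornology.IsBounded.subset (Metric.isBounded_closedBall (x := (0:ℝ×ℝ)) (r := r))
    intro p hp
    simp only [hS, mem_setOf_eq] at hp
    have h1 : p.1^2 ≤ r^2 := by nlinarith [sq_nonneg p.2]
    have h2 : p.2^2 ≤ r^2 := by nlinarith [sq_nonneg p.1]
    have a1 : |p.1| ≤ r := by
      rw [← Real.sqrt_sq_eq_abs, ← Real.sqrt_sq hr.le]; exact Real.sqrt_le_sqrt h1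
    have a2 : |p.2| ≤ r := by
      rw [← Real.sqrt_sq_eq_abs, ← Real.sqrt_sq hr.le]; exact Real.sqrt_le_sqrt h2
    simp only [Metric.mem_closedBall, Prod.dist_eq, dist_zero_right, Real.norm_eq_abs]
    exact max_le a1 a2
  have hf_int : Integrable (S.indicator (fun p : ℝ × ℝ => g p.2)) ((volume : Measure ℝ).prod volume) := by
    rw [← Measure.volume_eq_prod, integrable_indicator_iff hSmeas]
    exact ((hg.comp continuous_snd).continuousOn).integrableOn_compact hScompact
  rw [← MeasureTheory.integral_indicator hSmeas, Measure.volume_eq_prod,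
    MeasureTheory.integral_prod_symm _ hf_int]
  have hinner : ∀ y : ℝ, (∫ x : ℝ, S.indicator (fun p : ℝ × ℝ => g p.2) (x, y))
      = (Icc (-r) r).indicator (fun y => 2 * Real.sqrt (r^2 - y^2) * g y) y := by
    intro y
    by_cases hy : y^2 ≤ r^2
    · have hyIcc : y ∈ Icc (-r) r := by
        have : |y| ≤ r := by
          rw [← Real.sqrt_sq_eq_abs, ← Real.sqrt_sq hr.le]; exact Real.sqrt_le_sqrt hy
        exact ⟨neg_le_of_abs_le this, le_of_abs_le this⟩
      have hxy : ∀ x : ℝ, S.indicator (fun p : ℝ × ℝ => g p.2) (x, y)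
          = (Icc (-(Real.sqrt (r^2 - y^2))) (Real.sqrt (r^2 - y^2))).indicator (fun _ => g y) x := by
        intro x
        have hmem : (x, y) ∈ S ↔ x ∈ Icc (-(Real.sqrt (r^2 - y^2))) (Real.sqrt (r^2 - y^2)) := by
          simp only [hS, mem_setOf_eq, mem_Icc]
          constructor
          · intro hle
            have hx2 : x^2 ≤ r^2 - y^2 := by linarith
            have := Real.abs_le_sqrt hx2
            exact ⟨neg_le_of_abs_le this, le_of_abs_le this⟩
          · rintro ⟨ha1, ha2⟩
            have habs : |x| ≤ Real.sqrt (r^2 - y^2) := abs_le.2 ⟨ha1, ha2⟩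
            have hx2 : x^2 ≤ r^2 - y^2 := by
              calc x^2 = |x|^2 := (sq_abs x).symm
                _ ≤ Real.sqrt (r^2 - y^2)^2 := by
                    exact pow_le_pow_left₀ (abs_nonneg x) habs 2
                _ = r^2 - y^2 := Real.sq_sqrt (by linarith)
            linarith
        simp only [Set.indicator_apply]
        rw [if_congr hmem rfl rfl]
      rw [funext hxy, MeasureTheory.integral_indicator_const _ measurableSet_Icc]
      rw [Real.volume_real_Icc, Set.indicator_of_mem hyIcc]
      rw [max_eq_left (by rw [sub_neg_eq_add]; positivity)]
      simp only [smul_eq_mul]; ring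
    · have hzero : ∀ x : ℝ, S.indicator (fun p : ℝ × ℝ => g p.2) (x, y) = 0 := by
        intro x
        apply Set.indicator_of_notMem
        simp only [hS, mem_setOf_eq, not_le]
        nlinarith [sq_nonneg x]
      rw [funext hzero, integral_zero, Set.indicator_of_notMem]
      intro hcon
      have : |y| ≤ r := abs_le.2 ⟨hcon.1, hcon.2⟩
      nlinarith [sq_abs y, mul_self_le_mul_self (abs_nonneg y) this, sq_abs y]
  rw [funext hinner, MeasureTheory.integral_indicator measurableSet_Icc,
    MeasureTheory.integral_Icc_eq_integral_Ioc, ← intervalIntegral.integral_of_le (by linarith)]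

lemma aux_1d (r a b : ℝ) (hr : 0 < r) (ha : 0 < a) (hab : a ≤ b) :
    ∫ y in (-r)..r, Real.sqrt (r^2 - y^2) * (Real.log (y^2 + b) - Real.log (y^2 + a))
      = π * (Mfun r b - Mfun r a) := by
  have hrr : (-r : ℝ) ≤ r := by linarith
  -- uncurried integrand
  set T : ℝ × ℝ → ℝ := fun q => Real.sqrt (r^2 - q.1^2) * (q.1^2 + q.2)⁻¹ with hT
  have hTint : Integrable T (((volume : Measure ℝ).restrict (Ioc (-r) r)).prod
      ((volume : Measure ℝ).restrict (Ioc a b))) := by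
    rw [Measure.prod_restrict]
    have hcont : ContinuousOn T ((Icc (-r) r) ×ˢ (Icc a b)) := by
      apply ContinuousOn.mul
      · exact (Real.continuous_sqrt.comp (by fun_prop)).continuousOn
      · apply ContinuousOn.inv₀ (by fun_prop)
        rintro ⟨y, t⟩ ⟨-, ht⟩
        have : 0 < y^2 + t := by nlinarith [sq_nonneg y, ht.1]
        exact this.ne'
    have hcompact : IsCompact ((Icc (-r) r) ×ˢ (Icc a b)) := isCompact_Icc.prod isCompact_Icc
    exact (hcont.integrableOn_compact hcompact).mono_set
      (Set.prod_mono Ioc_subset_Icc_self Ioc_subset_Icc_self)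
  calc ∫ y in (-r)..r, Real.sqrt (r^2 - y^2) * (Real.log (y^2 + b) - Real.log (y^2 + a))
      = ∫ y in (-r)..r, ∫ t in a..b, Real.sqrt (r^2 - y^2) * (y^2 + t)⁻¹ := by
        apply intervalIntegral.integral_congr
        intro y _
        beta_reduce
        rw [intervalIntegral.integral_const_mul, aux_log y a b ha hab]
    _ = ∫ y in Ioc (-r) r, ∫ t in Ioc a b, T (y, t) := by
        rw [intervalIntegral.integral_of_le hrr]
        apply setIntegral_congr_fun measurableSet_Ioc
        intro y _
        beta_reduce
        rw [intervalIntegral.integral_of_le hab]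
    _ = ∫ t in Ioc a b, ∫ y in Ioc (-r) r, T (y, t) := by
        exact MeasureTheory.integral_integral_swap hTint
    _ = ∫ t in Ioc a b, π * (Real.sqrt (t + r^2) / Real.sqrt t - 1) := by
        apply setIntegral_congr_fun measurableSet_Ioc
        intro t ht
        beta_reduce
        have ht0 : 0 < t := lt_of_le_of_lt ha.le ht.1
        rw [← intervalIntegral.integral_of_le hrr, ← aux_inner r t hr ht0]
        apply intervalIntegral.integral_congr
        intro y _
        show Real.sqrt (r ^ 2 - y ^ 2) * (y ^ 2 + t)⁻¹ = Real.sqrt (r ^ 2 - y ^ 2) / (y ^ 2 + t)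
        rw [div_eq_mul_inv]
    _ = π * ∫ t in a..b, (Real.sqrt (t + r^2) / Real.sqrt t - 1) := by
        rw [intervalIntegral.integral_of_le hab, integral_const_mul]
    _ = π * (Mfun r b - Mfun r a) := by rw [aux_outer r a b hr ha hab]

set_option maxHeartbeats 2000000 in
/-- Average achievable rate for a full-coverage lossless waveguide. -/
theorem stmt2 (r h η Pt σ : ℝ) (hr : 0 < r) (hh : 0 < h) (hη : 0 < η) (hPt : 0 < Pt)
    (hσ : 0 < σ)
    (B Γ Λ : ℝ) (hB : B = η * Pt + σ ^ 2 * h ^ 2)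
    (hΓ : Γ = Real.sqrt (1 + σ ^ 2 * r ^ 2 / B))
    (hΛ : Λ = Real.sqrt (1 + r ^ 2 / h ^ 2)) :
    (1 / (π * r ^ 2)) *
        ∫ p in {p : ℝ × ℝ | p.1 ^ 2 + p.2 ^ 2 ≤ r ^ 2},
          Real.logb 2 (1 + η * Pt / (σ ^ 2 * (p.2 ^ 2 + h ^ 2)))
      = (1 / Real.log 2) * Real.log (1 + η * Pt / (σ ^ 2 * h ^ 2))
        + (2 / Real.log 2) *
          (Real.log ((1 + Γ) / (1 + Λ)) + (1 / 2) * (1 - Γ) / (1 + Γ)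
            - (1 / 2) * (1 - Λ) / (1 + Λ)) := by
  have hL : (0:ℝ) < Real.log 2 := Real.log_pos (by norm_num)
  obtain ⟨aa, haa_def⟩ : ∃ aa : ℝ, aa = h^2 := ⟨_, rfl⟩
  obtain ⟨bb, hbb_def⟩ : ∃ bb : ℝ, bb = h^2 + η * Pt / σ^2 := ⟨_, rfl⟩
  have haa : 0 < aa := by rw [haa_def]; positivity
  have hbb : 0 < bb := by rw [hbb_def]; positivity
  have hab : aa ≤ bb := by
    rw [haa_def, hbb_def]; nlinarith [div_pos (mul_pos hη hPt) (pow_pos hσ 2)]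
  have hBσ : B = σ^2 * bb := by rw [hB, hbb_def]; field_simp; ring
  have hBpos : 0 < B := by rw [hBσ]; positivity
  -- Γ and Λ in terms of aa, bb
  have hΓval : Γ = Real.sqrt (bb + r^2) / Real.sqrt bb := by
    rw [hΓ, ← Real.sqrt_div (by positivity : (0:ℝ) ≤ bb + r^2) bb]
    congr 1
    rw [hBσ]
    field_simp
  have hΛval : Λ = Real.sqrt (aa + r^2) / Real.sqrt aa := by
    rw [hΛ, ← Real.sqrt_div (by positivity : (0:ℝ) ≤ aa + r^2) aa]
    congr 1
    rw [haa_def]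
    field_simp
  have hsbb : 0 < Real.sqrt bb := Real.sqrt_pos.2 hbb
  have hsaa : 0 < Real.sqrt aa := Real.sqrt_pos.2 haa
  have hsbbr : 0 < Real.sqrt (bb + r^2) := Real.sqrt_pos.2 (by positivity)
  have hsaar : 0 < Real.sqrt (aa + r^2) := Real.sqrt_pos.2 (by positivity)
  have hΓpos : 0 < Γ := by rw [hΓval]; positivity
  have hΛpos : 0 < Λ := by rw [hΛval]; positivity
  have h1Γ : (0:ℝ) < 1 + Γ := by linarith
  have h1Λ : (0:ℝ) < 1 + Λ := by linarith
  -- key algebraic identities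
  have keyb1 : Real.sqrt bb * Real.sqrt (bb + r^2) = bb * Γ := by
    rw [hΓval]
    field_simp
    linear_combination Real.sq_sqrt hbb.le
  have keya1 : Real.sqrt aa * Real.sqrt (aa + r^2) = aa * Λ := by
    rw [hΛval]
    field_simp
    linear_combination Real.sq_sqrt haa.le
  have hΓsq : Γ^2 = (bb + r^2) / bb := by
    rw [hΓval, div_pow, Real.sq_sqrt (by positivity : (0:ℝ) ≤ bb + r^2), Real.sq_sqrt hbb.le]
  have hΛsq : Λ^2 = (aa + r^2) / aa := by
    rw [hΛval, div_pow, Real.sq_sqrt (by positivity : (0:ℝ) ≤ aa + r^2), Real.sq_sqrt haa.le]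
  have keyb2 : bb * Γ - bb = r^2 / (1 + Γ) := by
    rw [eq_div_iff h1Γ.ne']
    have := hΓsq
    field_simp at this
    linear_combination this
  have keya2 : aa * Λ - aa = r^2 / (1 + Λ) := by
    rw [eq_div_iff h1Λ.ne']
    have := hΛsq
    field_simp at this
    linear_combination this
  have keyb3 : Real.log (Real.sqrt bb + Real.sqrt (bb + r^2)) = Real.log bb / 2 + Real.log (1 + Γ) := by
    have e : Real.sqrt bb + Real.sqrt (bb + r^2) = Real.sqrt bb * (1 + Γ) := by
      rw [hΓval]; field_simp
    rw [e, Real.log_mul hsbb.ne' h1Γ.ne', Real.log_sqrt hbb.le]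
  have keya3 : Real.log (Real.sqrt aa + Real.sqrt (aa + r^2)) = Real.log aa / 2 + Real.log (1 + Λ) := by
    have e : Real.sqrt aa + Real.sqrt (aa + r^2) = Real.sqrt aa * (1 + Λ) := by
      rw [hΛval]; field_simp
    rw [e, Real.log_mul hsaa.ne' h1Λ.ne', Real.log_sqrt haa.le]
  -- the integrand as g ∘ snd
  obtain ⟨g, hg_def⟩ : ∃ g : ℝ → ℝ, g = fun y => (Real.log (y^2 + bb) - Real.log (y^2 + aa)) / Real.log 2 := ⟨_, rfl⟩
  have hg : Continuous g := by
    rw [hg_def]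
    apply Continuous.div_const
    apply Continuous.sub
    · exact Continuous.log (by fun_prop) (fun y => (by nlinarith [sq_nonneg y] : (0:ℝ) < y^2 + bb).ne')
    · exact Continuous.log (by fun_prop) (fun y => (by nlinarith [sq_nonneg y] : (0:ℝ) < y^2 + aa).ne')
  have hpt : ∀ y : ℝ, Real.logb 2 (1 + η * Pt / (σ ^ 2 * (y ^ 2 + h ^ 2))) = g y := by
    intro y
    have h1 : 1 + η * Pt / (σ ^ 2 * (y ^ 2 + h ^ 2)) = (y^2 + bb) / (y^2 + aa) := by
      rw [hbb_def, haa_def]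
      field_simp
      ring
    rw [h1, Real.logb, Real.log_div (by nlinarith [sq_nonneg y] : (0:ℝ) < y^2 + bb).ne'
      (by nlinarith [sq_nonneg y] : (0:ℝ) < y^2 + aa).ne', hg_def]
  have hstep1 : (∫ p in {p : ℝ × ℝ | p.1 ^ 2 + p.2 ^ 2 ≤ r ^ 2},
      Real.logb 2 (1 + η * Pt / (σ ^ 2 * (p.2 ^ 2 + h ^ 2)))) = ∫ p in {p : ℝ × ℝ | p.1 ^ 2 + p.2 ^ 2 ≤ r ^ 2}, g p.2 := by
    apply integral_congr_ae
    filter_upwards with p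
    exact hpt p.2
  rw [hstep1, aux_disk r hr g hg]
  have hstep2 : (∫ y in (-r)..r, 2 * Real.sqrt (r^2 - y^2) * g y)
      = (2 / Real.log 2) * ∫ y in (-r)..r, Real.sqrt (r^2 - y^2) * (Real.log (y^2 + bb) - Real.log (y^2 + aa)) := by
    rw [← intervalIntegral.integral_const_mul]
    apply intervalIntegral.integral_congr
    intro y _
    rw [hg_def]
    field_simp
  rw [hstep2, aux_1d r aa bb hr haa hab]
  -- final algebra
  have hlog1 : Real.log (1 + η * Pt / (σ ^ 2 * h ^ 2)) = Real.log bb - Real.log aa := by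
    have e : 1 + η * Pt / (σ ^ 2 * h ^ 2) = bb / aa := by
      rw [hbb_def, haa_def]; field_simp
    rw [e, Real.log_div hbb.ne' haa.ne']
  have hlog2 : Real.log ((1 + Γ) / (1 + Λ)) = Real.log (1 + Γ) - Real.log (1 + Λ) := by
    rw [Real.log_div h1Γ.ne' h1Λ.ne']
  rw [hlog1, hlog2]
  unfold Mfun
  rw [keyb1, keya1, keyb3, keya3]
  have expand : bb * Γ + r ^ 2 * (Real.log bb / 2 + Real.log (1 + Γ)) - bb
      - (aa * Λ + r ^ 2 * (Real.log aa / 2 + Real.log (1 + Λ)) - aa)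
      = r^2/(1+Γ) - r^2/(1+Λ) + r ^ 2 * (Real.log bb - Real.log aa) / 2
        + r^2 * (Real.log (1 + Γ) - Real.log (1 + Λ)) := by
    rw [← keyb2, ← keya2]; ring
  rw [expand]
  field_simp
  ring
end

section
/- Let r > l > 0, h > 0 and define D(x,y) = √(y² + (x+l)²) if x < −l, D(x,y) = |y| if −l ≤ x ≤ l, and D(x,y) = √(y² + (x−l)²) if x > l. For (X,Y) uniform on the disk of radius r, and 0 ≤ x ≤ r − l, P(D(X,Y) ≤ x) = (4xl + πx²)/(π r²). -/
open Real MeasureTheory Set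

/-!
The set `{D ≤ x}` is the stadium `y² + g(t)² ≤ x²`, where `g(t) = max (|t| - l) 0` is the distance
from `t` to `[-l, l]`; it lies in the disk of radius `l + x ≤ r`. By Cavalieri its area is
`∫ 2 √(x² - g(t)²) dt`. Over `[-l, l]` the integrand is the constant `2x`, giving the rectangle
`4xl`; over `[-l - x, -l]` and `[l, l + x]` it is a translate of the width of a disk of radius `x`,
and the two pieces add up to `π x²`.
-/

def segmentGap (l t : ℝ) : ℝ := max (|t| - l) 0

section segmentGap

variable {l t : ℝ}

lemma segmentGap_eq_zero (h : t ∈ Icc (-l) l) : segmentGap l t = 0 :=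
  max_eq_right (sub_nonpos.2 (abs_le.2 h))

lemma segmentGap_of_le_neg (hl : 0 ≤ l) (h : t ≤ -l) : segmentGap l t = -t - l := by
  rw [segmentGap, abs_of_nonpos (by linarith), max_eq_left (by linarith)]

lemma segmentGap_of_le (hl : 0 ≤ l) (h : l ≤ t) : segmentGap l t = t - l := by
  rw [segmentGap, abs_of_nonneg (by linarith), max_eq_left (by linarith)]

lemma segmentGap_nonneg : 0 ≤ segmentGap l t := le_max_right _ _

lemma abs_le_add_segmentGap : |t| ≤ l + segmentGap l t := by
  unfold segmentGap; linarith [le_max_left (|t| - l) 0]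

@[fun_prop]
lemma continuous_segmentGap : Continuous (segmentGap l) := by
  unfold segmentGap; fun_prop

end segmentGap

noncomputable def segmentDist (l : ℝ) (p : ℝ × ℝ) : ℝ :=
  if p.1 < -l then √(p.2 ^ 2 + (p.1 + l) ^ 2)
  else if p.1 ≤ l then |p.2|
  else √(p.2 ^ 2 + (p.1 - l) ^ 2)

lemma segmentDist_eq_sqrt {l : ℝ} (hl : 0 ≤ l) (p : ℝ × ℝ) :
    segmentDist l p = √(p.2 ^ 2 + segmentGap l p.1 ^ 2) := by
  unfold segmentDist
  split_ifs with h₁ h₂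
  · rw [segmentGap_of_le_neg hl h₁.le]; ring_nf
  · rw [segmentGap_eq_zero ⟨not_lt.1 h₁, h₂⟩, zero_pow two_ne_zero, add_zero, sqrt_sq_eq_abs]
  · rw [segmentGap_of_le hl (not_le.1 h₂).le]

def stadium (l x : ℝ) : Set (ℝ × ℝ) := {p | p.2 ^ 2 + segmentGap l p.1 ^ 2 ≤ x ^ 2}

section stadium

variable {l x : ℝ}

lemma segmentDist_le_iff (hl : 0 ≤ l) (hx : 0 ≤ x) {p : ℝ × ℝ} :
    segmentDist l p ≤ x ↔ p ∈ stadium l x := by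
  rw [segmentDist_eq_sqrt hl, sqrt_le_left hx]; rfl

lemma stadium_subset_closedDisk (hl : 0 ≤ l) (hx : 0 ≤ x) :
    stadium l x ⊆ {p | p.1 ^ 2 + p.2 ^ 2 ≤ (l + x) ^ 2} := by
  intro p (hp : p.2 ^ 2 + segmentGap l p.1 ^ 2 ≤ x ^ 2)
  have hgap : segmentGap l p.1 ≤ x :=
    (pow_le_pow_iff_left₀ segmentGap_nonneg hx two_ne_zero).1 (by linarith [sq_nonneg p.2])
  have hfst : p.1 ^ 2 ≤ (l + segmentGap l p.1) ^ 2 := by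
    rw [← sq_abs]; exact pow_le_pow_left₀ (abs_nonneg _) abs_le_add_segmentGap 2
  show p.1 ^ 2 + p.2 ^ 2 ≤ (l + x) ^ 2
  nlinarith

end stadium

lemma volume_setOf_sq_le (a : ℝ) : volume {y : ℝ | y ^ 2 ≤ a} = ENNReal.ofReal (2 * √a) := by
  rcases le_or_gt 0 a with ha | ha
  · have : {y : ℝ | y ^ 2 ≤ a} = Icc (-√a) √a := by ext y; exact Real.sq_le ha
    rw [this, volume_Icc]; ring_nf
  · have : {y : ℝ | y ^ 2 ≤ a} = ∅ :=
      eq_empty_of_forall_notMem fun y (hy : y ^ 2 ≤ a) => by nlinarith [sq_nonneg y]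
    rw [this, measure_empty, sqrt_eq_zero_of_nonpos ha.le, mul_zero, ENNReal.ofReal_zero]

lemma volume_setOf_sq_add_le {q : ℝ → ℝ} (hq : Measurable q) (c : ℝ) :
    volume {p : ℝ × ℝ | p.2 ^ 2 + q p.1 ≤ c} = ∫⁻ t, ENNReal.ofReal (2 * √(c - q t)) := by
  rw [Measure.volume_eq_prod, Measure.prod_apply (measurableSet_le (by fun_prop) (by fun_prop))]
  refine lintegral_congr fun t => ?_
  rw [← volume_setOf_sq_le]
  congr 1; ext y
  simp only [mem_preimage, mem_ofPred_eq, le_sub_iff_add_le]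

lemma integral_sqrt_sq_sub_sq {x : ℝ} (hx : 0 ≤ x) :
    ∫ s in -x..x, √(x ^ 2 - s ^ 2) = π * x ^ 2 / 2 := by
  have hscale : ∀ u : ℝ, √(x ^ 2 - (x * u) ^ 2) = x * √(1 - u ^ 2) := fun u => by
    rw [show x ^ 2 - (x * u) ^ 2 = x ^ 2 * (1 - u ^ 2) by ring, sqrt_mul (sq_nonneg x),
      sqrt_sq hx]
  have := intervalIntegral.smul_integral_comp_mul_left (a := -1) (b := 1)
    (fun s => √(x ^ 2 - s ^ 2)) x
  simp only [hscale, intervalIntegral.integral_const_mul, integral_sqrt_one_sub_sq, smul_eq_mul,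
    mul_neg, mul_one] at this
  rw [← this]; ring

noncomputable def stadiumWidth (l x t : ℝ) : ℝ := 2 * √(x ^ 2 - segmentGap l t ^ 2)

section stadiumWidth

variable {l x : ℝ}

lemma continuous_stadiumWidth : Continuous (stadiumWidth l x) := by
  unfold stadiumWidth; fun_prop

lemma support_stadiumWidth_subset (hl : 0 ≤ l) (hx : 0 ≤ x) :
    Function.support (stadiumWidth l x) ⊆ Ioc (-(l + x)) (l + x) := by
  intro t ht
  by_contra hout
  have hgap : x ≤ segmentGap l t := by
    rcases le_or_gt t (-(l + x)) with h | h
    · rw [segmentGap_of_le_neg hl (by linarith)]; linarith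
    · have : l + x < t := not_le.1 fun h' => hout ⟨h, h'⟩
      rw [segmentGap_of_le hl (by linarith)]; linarith
  refine ht ?_
  rw [stadiumWidth, sqrt_eq_zero_of_nonpos (by nlinarith), mul_zero]

lemma integrable_stadiumWidth (hl : 0 ≤ l) (hx : 0 ≤ x) : Integrable (stadiumWidth l x) :=
  continuous_stadiumWidth.integrable_of_hasCompactSupport <| HasCompactSupport.intro isCompact_Icc
    fun _ ht => Function.notMem_support.1 fun h =>
      ht (Ioc_subset_Icc_self (support_stadiumWidth_subset hl hx h))

lemma integral_stadiumWidth_left (hl : 0 ≤ l) (hx : 0 ≤ x) :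
    ∫ t in -(l + x)..-l, stadiumWidth l x t = ∫ s in -x..0, 2 * √(x ^ 2 - s ^ 2) := by
  have hshift : EqOn (stadiumWidth l x) (fun t => 2 * √(x ^ 2 - (t + l) ^ 2))
      (uIcc (-(l + x)) (-l)) := by
    intro t ht
    rw [uIcc_of_le (by linarith)] at ht
    rw [stadiumWidth, segmentGap_of_le_neg hl ht.2, show (-t - l) ^ 2 = (t + l) ^ 2 by ring]
  rw [intervalIntegral.integral_congr hshift,
    intervalIntegral.integral_comp_add_right (fun s => 2 * √(x ^ 2 - s ^ 2))]
  norm_num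

lemma integral_stadiumWidth_right (hl : 0 ≤ l) (hx : 0 ≤ x) :
    ∫ t in l..l + x, stadiumWidth l x t = ∫ s in 0..x, 2 * √(x ^ 2 - s ^ 2) := by
  have hshift : EqOn (stadiumWidth l x) (fun t => 2 * √(x ^ 2 - (t - l) ^ 2))
      (uIcc l (l + x)) := by
    intro t ht
    rw [uIcc_of_le (by linarith)] at ht
    rw [stadiumWidth, segmentGap_of_le hl ht.1]
  rw [intervalIntegral.integral_congr hshift,
    intervalIntegral.integral_comp_sub_right (fun s => 2 * √(x ^ 2 - s ^ 2))]
  norm_num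

lemma integral_stadiumWidth_middle (hl : 0 ≤ l) (hx : 0 ≤ x) :
    ∫ t in -l..l, stadiumWidth l x t = 4 * x * l := by
  have hconst : EqOn (stadiumWidth l x) (fun _ => 2 * x) (uIcc (-l) l) := by
    intro t ht
    rw [uIcc_of_le (by linarith)] at ht
    rw [stadiumWidth, segmentGap_eq_zero ht, zero_pow two_ne_zero, sub_zero, sqrt_sq hx]
  rw [intervalIntegral.integral_congr hconst, intervalIntegral.integral_const, smul_eq_mul]
  ring

lemma integral_stadiumWidth (hl : 0 ≤ l) (hx : 0 ≤ x) :
    ∫ t, stadiumWidth l x t = 4 * x * l + π * x ^ 2 := by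
  have hint : ∀ a b, IntervalIntegrable (stadiumWidth l x) volume a b := fun _ _ =>
    (integrable_stadiumWidth hl hx).intervalIntegrable
  have hcont : Continuous fun s => 2 * √(x ^ 2 - s ^ 2) := by fun_prop
  rw [← intervalIntegral.integral_eq_integral_of_support_subset (support_stadiumWidth_subset hl hx),
    ← intervalIntegral.integral_add_adjacent_intervals (b := -l) (hint _ _) (hint _ _),
    ← intervalIntegral.integral_add_adjacent_intervals (a := -l) (b := l) (hint _ _) (hint _ _),
    integral_stadiumWidth_left hl hx, integral_stadiumWidth_middle hl hx,
    integral_stadiumWidth_right hl hx]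
  have hdisk_area : ∫ s in -x..x, 2 * √(x ^ 2 - s ^ 2) = π * x ^ 2 := by
    rw [intervalIntegral.integral_const_mul, integral_sqrt_sq_sub_sq hx]; ring
  linarith [intervalIntegral.integral_add_adjacent_intervals (μ := volume) (b := 0)
    (hcont.intervalIntegrable (-x) 0) (hcont.intervalIntegrable 0 x)]

end stadiumWidth

lemma volume_stadium {l x : ℝ} (hl : 0 ≤ l) (hx : 0 ≤ x) :
    volume (stadium l x) = ENNReal.ofReal (4 * x * l + π * x ^ 2) := by
  rw [← integral_stadiumWidth hl hx, ofReal_integral_eq_lintegral_ofReal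
    (integrable_stadiumWidth hl hx) (.of_forall fun _ => by unfold stadiumWidth; positivity)]
  exact volume_setOf_sq_add_le (q := fun t => segmentGap l t ^ 2) (by fun_prop) (x ^ 2)

theorem stmt6_general (r l x : ℝ) (hl : 0 < l) (hx : 0 ≤ x) (hxr : x ≤ r - l)
    (D : ℝ × ℝ → ℝ)
    (hD : ∀ p : ℝ × ℝ, D p =
      if p.1 < -l then Real.sqrt (p.2 ^ 2 + (p.1 + l) ^ 2)
      else if p.1 ≤ l then |p.2|
      else Real.sqrt (p.2 ^ 2 + (p.1 - l) ^ 2)) :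
    (volume {p : ℝ × ℝ | p.1 ^ 2 + p.2 ^ 2 ≤ r ^ 2 ∧ D p ≤ x}).toReal / (π * r ^ 2)
      = (4 * x * l + π * x ^ 2) / (π * r ^ 2) := by
  obtain rfl : D = segmentDist l := funext hD
  have hdisk : (l + x) ^ 2 ≤ r ^ 2 := pow_le_pow_left₀ (by positivity) (by linarith) 2
  have hset : {p : ℝ × ℝ | p.1 ^ 2 + p.2 ^ 2 ≤ r ^ 2 ∧ segmentDist l p ≤ x} = stadium l x := by
    ext p
    rw [mem_ofPred_eq, segmentDist_le_iff hl.le hx, and_iff_right_iff_imp]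
    exact fun hp => (stadium_subset_closedDisk hl.le hx hp).out.trans hdisk
  rw [hset, volume_stadium hl.le hx, ENNReal.toReal_ofReal (by positivity)]

/-- Partial-coverage CDF in the stadium regime: for (X,Y) uniform on the disk of radius r,
D the horizontal distance to the segment [−l,l]×{0}, and 0 ≤ x ≤ r − l,
P(D ≤ x) = (4xl + πx²)/(π r²). -/
theorem stmt6 (r l x : ℝ) (hl : 0 < l) (hlr : l < r) (hx : 0 ≤ x) (hxr : x ≤ r - l)
    (D : ℝ × ℝ → ℝ)
    (hD : ∀ p : ℝ × ℝ, D p =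
      if p.1 < -l then Real.sqrt (p.2 ^ 2 + (p.1 + l) ^ 2)
      else if p.1 ≤ l then |p.2|
      else Real.sqrt (p.2 ^ 2 + (p.1 - l) ^ 2)) :
    (volume {p : ℝ × ℝ | p.1 ^ 2 + p.2 ^ 2 ≤ r ^ 2 ∧ D p ≤ x}).toReal / (π * r ^ 2)
      = (4 * x * l + π * x ^ 2) / (π * r ^ 2) :=
  stmt6_general r l x hl hx hxr D hD
end

section
/- Let r > l > 0. For √(r² − l²) ≤ x ≤ r, the set of points (u,v) in the disk of radius r with D(u,v) ≤ x (where D is the distance to the segment from (−l,0) to (l,0)) is the entire disk intersected with the vertical strip condition; equivalently, P(D ≤ x) = (2/(π r²))·(x√(r² − x²) + r²·arcsin(x/r)) for (U,V) uniform on the disk. -/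
open Real MeasureTheory Set


lemma ftc_semi (r x : ℝ) (hr : 0 < r) (hx0 : 0 ≤ x) (hxr : x ≤ r) :
    ∫ y in (-x)..x, 2 * Real.sqrt (r ^ 2 - y ^ 2)
      = 2 * (x * Real.sqrt (r ^ 2 - x ^ 2) + r ^ 2 * Real.arcsin (x / r)) := by
  have key : ∫ y in (-x)..x, 2 * Real.sqrt (r ^ 2 - y ^ 2)
      = (x * Real.sqrt (r ^ 2 - x ^ 2) + r ^ 2 * Real.arcsin (x / r))
        - ((-x) * Real.sqrt (r ^ 2 - (-x) ^ 2) + r ^ 2 * Real.arcsin ((-x) / r)) := by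
    apply intervalIntegral.integral_eq_sub_of_hasDeriv_right_of_le (by linarith)
    · apply Continuous.continuousOn
      continuity
    · intro v hv
      have hv2 : v ^ 2 < r ^ 2 := by
        rcases hv with ⟨h1, h2⟩
        nlinarith
      have hpos : 0 < r ^ 2 - v ^ 2 := by linarith
      have hsne : Real.sqrt (r ^ 2 - v ^ 2) ≠ 0 := by positivity
      have h1 : HasDerivAt (fun v : ℝ => r ^ 2 - v ^ 2) (-(2 * v)) v := by
        simpa using ((hasDerivAt_pow 2 v).const_sub (r ^ 2))
      have hs : HasDerivAt (fun v : ℝ => Real.sqrt (r ^ 2 - v ^ 2))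
          (1 / (2 * Real.sqrt (r ^ 2 - v ^ 2)) * (-(2 * v))) v :=
        (Real.hasDerivAt_sqrt (ne_of_gt hpos)).comp v h1
      have h3 : HasDerivAt (fun v : ℝ => v * Real.sqrt (r ^ 2 - v ^ 2))
          (1 * Real.sqrt (r ^ 2 - v ^ 2)
            + v * (1 / (2 * Real.sqrt (r ^ 2 - v ^ 2)) * (-(2 * v)))) v :=
        (hasDerivAt_id v).mul hs
      have hvrlt : |v / r| < 1 := by
        rw [abs_div, abs_of_pos hr, div_lt_one hr]
        exact abs_lt_of_sq_lt_sq (by nlinarith) hr.le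
      have h4 : HasDerivAt Real.arcsin (1 / Real.sqrt (1 - (v / r) ^ 2)) (v / r) :=
        Real.hasDerivAt_arcsin (by intro h; rw [h] at hvrlt; simp at hvrlt)
          (by intro h; rw [h] at hvrlt; simp at hvrlt)
      have h6 : HasDerivAt (fun v : ℝ => Real.arcsin (v / r))
          (1 / Real.sqrt (1 - (v / r) ^ 2) * (1 / r)) v :=
        by have := h4.comp v ((hasDerivAt_id' v).div_const r); exact this
      have h7 := (h3.add (h6.const_mul (r ^ 2)))
      have heq : 1 * Real.sqrt (r ^ 2 - v ^ 2)
            + v * (1 / (2 * Real.sqrt (r ^ 2 - v ^ 2)) * (-(2 * v)))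
            + r ^ 2 * (1 / Real.sqrt (1 - (v / r) ^ 2) * (1 / r))
          = 2 * Real.sqrt (r ^ 2 - v ^ 2) := by
        have e1 : 1 - (v / r) ^ 2 = (r ^ 2 - v ^ 2) / r ^ 2 := by
          field_simp
        have e2 : Real.sqrt ((r ^ 2 - v ^ 2) / r ^ 2) = Real.sqrt (r ^ 2 - v ^ 2) / r := by
          rw [Real.sqrt_div hpos.le, Real.sqrt_sq hr.le]
        rw [e1, e2]
        have hsq := Real.sq_sqrt hpos.le
        field_simp
        linear_combination (-1) * hsq
      rw [heq] at h7
      exact h7.hasDerivWithinAt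
    · apply Continuous.intervalIntegrable
      continuity
  rw [key, neg_div, Real.arcsin_neg, neg_sq]
  ring

lemma vol_strip (r x : ℝ) (hr : 0 < r) (hx0 : 0 ≤ x) (hxr : x ≤ r) :
    volume {p : ℝ × ℝ | p.1 ^ 2 + p.2 ^ 2 ≤ r ^ 2 ∧ |p.2| ≤ x}
      = ENNReal.ofReal (2 * (x * Real.sqrt (r ^ 2 - x ^ 2) + r ^ 2 * Real.arcsin (x / r))) := by
  set S : Set (ℝ × ℝ) := {p : ℝ × ℝ | p.1 ^ 2 + p.2 ^ 2 ≤ r ^ 2 ∧ |p.2| ≤ x} with hS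
  have hmeas : MeasurableSet S := by
    have : S = {p : ℝ × ℝ | p.1 ^ 2 + p.2 ^ 2 ≤ r ^ 2} ∩ {p : ℝ × ℝ | |p.2| ≤ x} := rfl
    rw [this]
    exact (measurableSet_le (by measurability) measurable_const).inter
      (measurableSet_le (by measurability) measurable_const)
  have hslice : ∀ y : ℝ, ((fun u : ℝ => (u, y)) ⁻¹' S)
      = if |y| ≤ x then Icc (-Real.sqrt (r ^ 2 - y ^ 2)) (Real.sqrt (r ^ 2 - y ^ 2)) else ∅ := by
    intro y
    split_ifs with hy
    · ext u
      have hy2 : 0 ≤ r ^ 2 - y ^ 2 := by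
        have : |y| ≤ r := le_trans hy hxr
        nlinarith [abs_nonneg y, sq_abs y, this]
      simp only [mem_preimage, hS, mem_setOf_eq, mem_Icc]
      constructor
      · rintro ⟨h1, _⟩
        have : |u| ≤ Real.sqrt (r ^ 2 - y ^ 2) := by
          rw [show |u| = Real.sqrt (u ^ 2) from (Real.sqrt_sq_eq_abs u).symm]
          exact Real.sqrt_le_sqrt (by linarith)
        exact abs_le.mp this
      · rintro ⟨h1, h2⟩
        refine ⟨?_, hy⟩
        have h3 : u ^ 2 ≤ Real.sqrt (r ^ 2 - y ^ 2) ^ 2 := sq_le_sq' h1 h2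
        rw [Real.sq_sqrt hy2] at h3
        linarith
    · ext u
      simp only [mem_preimage, hS, mem_setOf_eq, mem_empty_iff_false, iff_false, not_and]
      intro _; exact hy
  rw [Measure.volume_eq_prod, Measure.prod_apply_symm hmeas]
  have h1 : ∀ y : ℝ, volume ((fun u : ℝ => (u, y)) ⁻¹' S)
      = (Icc (-x) x).indicator (fun y => ENNReal.ofReal (2 * Real.sqrt (r ^ 2 - y ^ 2))) y := by
    intro y
    rw [hslice y]
    by_cases hy : |y| ≤ x
    · rw [if_pos hy, indicator_of_mem (mem_Icc.mpr (abs_le.mp hy)), Real.volume_Icc]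
      congr 1
      have := Real.sqrt_nonneg (r ^ 2 - y ^ 2)
      ring
    · rw [if_neg hy, indicator_of_notMem (fun h => hy (abs_le.mpr (mem_Icc.mp h)))]
      simp
  simp_rw [h1]
  rw [lintegral_indicator measurableSet_Icc]
  have hcont : Continuous fun y : ℝ => 2 * Real.sqrt (r ^ 2 - y ^ 2) := by continuity
  rw [← ofReal_integral_eq_lintegral_ofReal
      (hcont.continuousOn.integrableOn_Icc)
      (Filter.Eventually.of_forall fun y => by positivity)]
  congr 1
  rw [MeasureTheory.integral_Icc_eq_integral_Ioc,
    ← intervalIntegral.integral_of_le (by linarith : -x ≤ x)]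
  exact ftc_semi r x hr hx0 hxr

/-- Partial-coverage CDF in the outer regime: for √(r² − l²) ≤ x ≤ r,
P(D ≤ x) = (2/(π r²))·(x√(r² − x²) + r² arcsin(x/r)) for (U,V) uniform on the disk. -/
theorem stmt7 (r l x : ℝ) (hl : 0 < l) (hlr : l < r)
    (hx : Real.sqrt (r ^ 2 - l ^ 2) ≤ x) (hxr : x ≤ r)
    (D : ℝ × ℝ → ℝ)
    (hD : ∀ p : ℝ × ℝ, D p =
      if p.1 < -l then Real.sqrt (p.2 ^ 2 + (p.1 + l) ^ 2)
      else if p.1 ≤ l then |p.2|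
      else Real.sqrt (p.2 ^ 2 + (p.1 - l) ^ 2)) :
    (volume {p : ℝ × ℝ | p.1 ^ 2 + p.2 ^ 2 ≤ r ^ 2 ∧ D p ≤ x}).toReal / (π * r ^ 2)
      = 2 / (π * r ^ 2) * (x * Real.sqrt (r ^ 2 - x ^ 2) + r ^ 2 * Real.arcsin (x / r)) := by
  have hr : 0 < r := hl.trans hlr
  have hx0 : 0 ≤ x := le_trans (Real.sqrt_nonneg _) hx
  have hseteq : {p : ℝ × ℝ | p.1 ^ 2 + p.2 ^ 2 ≤ r ^ 2 ∧ D p ≤ x}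
      = {p : ℝ × ℝ | p.1 ^ 2 + p.2 ^ 2 ≤ r ^ 2 ∧ |p.2| ≤ x} := by
    ext p
    simp only [mem_setOf_eq]
    constructor
    · rintro ⟨hdisk, hDp⟩
      refine ⟨hdisk, ?_⟩
      rw [hD p] at hDp
      split_ifs at hDp with h1 h2
      · calc |p.2| = Real.sqrt (p.2 ^ 2) := (Real.sqrt_sq_eq_abs _).symm
          _ ≤ Real.sqrt (p.2 ^ 2 + (p.1 + l) ^ 2) := Real.sqrt_le_sqrt (by nlinarith [sq_nonneg (p.1 + l)])
          _ ≤ x := hDp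
      · exact hDp
      · calc |p.2| = Real.sqrt (p.2 ^ 2) := (Real.sqrt_sq_eq_abs _).symm
          _ ≤ Real.sqrt (p.2 ^ 2 + (p.1 - l) ^ 2) := Real.sqrt_le_sqrt (by nlinarith [sq_nonneg (p.1 - l)])
          _ ≤ x := hDp
    · rintro ⟨hdisk, hv⟩
      refine ⟨hdisk, ?_⟩
      rw [hD p]
      split_ifs with h1 h2
      · have hle : p.2 ^ 2 + (p.1 + l) ^ 2 ≤ r ^ 2 - l ^ 2 := by
          nlinarith [mul_pos hl (show (0:ℝ) < -(p.1 + l) by linarith)]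
        calc Real.sqrt (p.2 ^ 2 + (p.1 + l) ^ 2) ≤ Real.sqrt (r ^ 2 - l ^ 2) :=
            Real.sqrt_le_sqrt hle
          _ ≤ x := hx
      · exact hv
      · have h1' : l < p.1 := lt_of_not_ge h2
        have hle : p.2 ^ 2 + (p.1 - l) ^ 2 ≤ r ^ 2 - l ^ 2 := by
          nlinarith [mul_pos hl (show (0:ℝ) < p.1 - l by linarith)]
        calc Real.sqrt (p.2 ^ 2 + (p.1 - l) ^ 2) ≤ Real.sqrt (r ^ 2 - l ^ 2) :=
            Real.sqrt_le_sqrt hle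
          _ ≤ x := hx
  have hnn : 0 ≤ 2 * (x * Real.sqrt (r ^ 2 - x ^ 2) + r ^ 2 * Real.arcsin (x / r)) := by
    have h1 : 0 ≤ Real.arcsin (x / r) := Real.arcsin_nonneg.mpr (div_nonneg hx0 hr.le)
    have h2 : 0 ≤ x * Real.sqrt (r ^ 2 - x ^ 2) := mul_nonneg hx0 (Real.sqrt_nonneg _)
    nlinarith [sq_nonneg r]
  rw [hseteq, vol_strip r x hr hx0 hxr, ENNReal.toReal_ofReal hnn]
  ring
end
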